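/- Let A : ℝ^N → ℝ^N be a C¹ vector potential with B_{jk} := ∂_j A_k − ∂_k A_j, let ℏ ∈ (0,1], let v ∈ 𝒮(ℝ^N), let f ∈ 𝒮(ℝ^N × ℝ^N), and let Z = (z,ζ) ∈ ℝ^N × ℝ^N. Then ⟨ v^A_ℏ(Z), Op^A_ℏ(f) v^A_ℏ(Z) ⟩_{L²} = (2πℏ)^{-N} ∫_{ℝ^N}∫_{ℝ^N}∫_{ℝ^N} e^{(i/ℏ)(x−y)·(η−ζ)} f((x+y)/2, η) e^{-(i/ℏ) Γ^B⟨z,x,y⟩} conj(v_ℏ(x−z)) v_ℏ(y−z) dη dy dx, where v_ℏ(x) := ℏ^{-N/4} v(x/√ℏ). In particular this quantity depends on A only through B. -/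

import Mathlib

open MeasureTheory Filter Topology Real

noncomputable section

abbrev Vec (N : ℕ) := Fin N → ℝ

/-- Circulation `Γ^A[x,y]` of the vector potential `A` along the segment from `x` to `y`. -/
def circA {N : ℕ} (A : Vec N → Vec N) (x y : Vec N) : ℝ :=
  ∫ s in (0:ℝ)..1, ∑ j, (y j - x j) * A (x + s • (y - x)) j

/-- Flux `Γ^B⟨a,b,c⟩` of the magnetic field `B` through the triangle with vertices
`a`, `b`, `c`, given by the standard parametrization. -/
def fluxB {N : ℕ} (B : Fin N → Fin N → Vec N → ℝ) (a b c : Vec N) : ℝ :=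
  ∑ j, ∑ k, (b j - a j) * (c k - b k) *
    ∫ μ in (0:ℝ)..1, ∫ ν in (0:ℝ)..1, μ * B j k (a + μ • (b - a) + (μ * ν) • (c - b))

/-- The magnetic field of a vector potential: `(Bof A) j k = ∂_j A_k - ∂_k A_j`. -/
def Bof {N : ℕ} (A : Vec N → Vec N) (j k : Fin N) (x : Vec N) : ℝ :=
  fderiv ℝ (fun y => A y k) x (Pi.single j 1) - fderiv ℝ (fun y => A y j) x (Pi.single k 1)

/-- The magnetic coherent vector `v^A_ℏ(Z)`, as a function on `ℝ^N`:
`[v^A_ℏ(Z)](x) = ℏ^{-N/4} e^{(i/ℏ)(x-z/2)·ζ} e^{(i/ℏ)Γ^A[z,x]} v((x-z)/√ℏ)`. -/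
def cohVec {N : ℕ} (A : Vec N → Vec N) (ℏ : ℝ) (v : Vec N → ℂ) (Z : Vec N × Vec N) :
    Vec N → ℂ :=
  fun x => (ℏ ^ (-(N:ℝ)/4) : ℝ) *
    Complex.exp (Complex.I / (ℏ:ℂ) * ((∑ j, (x j - Z.1 j / 2) * Z.2 j : ℝ) : ℂ)) *
    Complex.exp (Complex.I / (ℏ:ℂ) * ((circA A Z.1 x : ℝ) : ℂ)) *
    v ((Real.sqrt ℏ)⁻¹ • (x - Z.1))

/-- The `L²` inner product `⟨f,g⟩ = ∫ conj(f) g`, conjugate-linear in the first variable. -/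
def l2inner {N : ℕ} (f g : Vec N → ℂ) : ℂ :=
  ∫ x : Vec N, (starRingEnd ℂ) (f x) * g x

/-- The magnetic Weyl quantization `Op^A_ℏ(f)` applied to `u`, as a function on `ℝ^N`. -/
def opA {N : ℕ} (A : Vec N → Vec N) (ℏ : ℝ) (f : Vec N × Vec N → ℂ) (u : Vec N → ℂ) :
    Vec N → ℂ :=
  fun x => (((2*π*ℏ)^N : ℝ) : ℂ)⁻¹ * ∫ y : Vec N, ∫ η : Vec N,
    Complex.exp (Complex.I / (ℏ:ℂ) * ((∑ j, (x j - y j) * η j : ℝ) : ℂ)) *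
    Complex.exp (-(Complex.I / (ℏ:ℂ)) * ((circA A x y : ℝ) : ℂ)) *
    f ((2:ℝ)⁻¹ • (x + y), η) * u y
/-!
Parametrize the triangle `(a, b, c)` by `Φ(μ, ν) = a + μ (b - a) + μν (c - b)` on the unit square.
Green's theorem for the pullback of the 1-form `∑ₖ A_k dx_k` turns `Γ^A[a,b] + Γ^A[b,c] - Γ^A[a,c]`
into `Γ^B⟨a,b,c⟩`: the edge `μ = 0` collapses to the point `a`, and the integrand of the double
integral is `μ ∑ⱼₖ (b - a)ⱼ (c - b)ₖ Bⱼₖ(Φ)`. In the expectation, the phases of the two coherent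
vectors and of the kernel of `Op^A_ℏ(f)` then combine pointwise into `(x - y)·(η - ζ) - Γ^B⟨z,x,y⟩`.
-/

theorem sum_mul_fderiv_sub_eq_sum_Bof {N : ℕ} (A : Vec N → Vec N) (x p q : Vec N) :
    ∑ k, (q k * fderiv ℝ (fun y => A y k) x p - p k * fderiv ℝ (fun y => A y k) x q) =
      ∑ j, ∑ k, p j * q k * Bof A j k x := by
  have expand : ∀ (k : Fin N) (r : Vec N),
      fderiv ℝ (fun y => A y k) x r = ∑ j, r j * fderiv ℝ (fun y => A y k) x (Pi.single j 1) := by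
    intro k r
    conv_lhs => rw [pi_eq_sum_univ' r]
    simp [smul_eq_mul]
  rw [Finset.sum_congr rfl fun k _ => by rw [expand k p, expand k q]]
  simp only [Bof, mul_sub, Finset.sum_sub_distrib, Finset.mul_sum]
  rw [Finset.sum_comm (f := fun k j => q k * (p j * _))]
  congr 1 <;> refine Finset.sum_congr rfl fun j _ => Finset.sum_congr rfl fun k _ => ?_ <;> ring

theorem hasDerivAt_sum_mul_apply_comp {N : ℕ} {A : Vec N → Vec N} (hA : Differentiable ℝ A)
    {p γ : ℝ → Vec N} {p' γ' : Vec N} {t : ℝ} (hp : HasDerivAt p p' t) (hγ : HasDerivAt γ γ' t) :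
    HasDerivAt (fun t => ∑ k, p t k * A (γ t) k)
      (∑ k, (p' k * A (γ t) k + p t k * fderiv ℝ (fun y => A y k) (γ t) γ')) t := by
  refine HasDerivAt.fun_sum fun k _ => ?_
  have hAk := ((differentiable_pi.mp hA k) (γ t)).hasFDerivAt.comp_hasDerivAt t hγ
  exact (hasDerivAt_pi.mp hp k).mul hAk

theorem integral_integral_finsetSum {ι : Type*} (s : Finset ι) (F : ι → ℝ → ℝ → ℝ)
    (hF : ∀ i ∈ s, Continuous (Function.uncurry (F i))) (a b c d : ℝ) :
    ∫ μ in a..b, ∫ ν in c..d, ∑ i ∈ s, F i μ ν = ∑ i ∈ s, ∫ μ in a..b, ∫ ν in c..d, F i μ ν := by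
  have hinner : ∀ μ, ∫ ν in c..d, ∑ i ∈ s, F i μ ν = ∑ i ∈ s, ∫ ν in c..d, F i μ ν :=
    fun μ => intervalIntegral.integral_finsetSum fun i hi =>
      ((hF i hi).comp (Continuous.prodMk_right μ)).intervalIntegrable _ _
  simp only [hinner]
  exact intervalIntegral.integral_finsetSum fun i hi =>
    (intervalIntegral.continuous_parametric_intervalIntegral_of_continuous' (hF i hi) c d
      ).intervalIntegrable _ _

theorem fderiv_apply_one_zero {E : Type*} [NormedAddCommGroup E] [NormedSpace ℝ E]
    {F : ℝ × ℝ → E} {μ ν : ℝ} {e : E} (hF : DifferentiableAt ℝ F (μ, ν))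
    (h : HasDerivAt (fun μ => F (μ, ν)) e μ) : fderiv ℝ F (μ, ν) (1, 0) = e :=
  (hF.hasFDerivAt.comp_hasDerivAt μ ((hasDerivAt_id μ).prodMk (hasDerivAt_const μ ν))).unique h

theorem fderiv_apply_zero_one {E : Type*} [NormedAddCommGroup E] [NormedSpace ℝ E]
    {F : ℝ × ℝ → E} {μ ν : ℝ} {e : E} (hF : DifferentiableAt ℝ F (μ, ν))
    (h : HasDerivAt (fun ν => F (μ, ν)) e ν) : fderiv ℝ F (μ, ν) (0, 1) = e :=
  (hF.hasFDerivAt.comp_hasDerivAt ν ((hasDerivAt_const ν μ).prodMk (hasDerivAt_id ν))).unique h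

theorem continuous_Bof {N : ℕ} {A : Vec N → Vec N} (hA : ContDiff ℝ 1 A) (j k : Fin N) :
    Continuous (Bof A j k) := by
  have hDA : ∀ i, Continuous (fderiv ℝ fun y => A y i) :=
    fun i => (contDiff_pi.mp hA i).continuous_fderiv one_ne_zero
  exact ((hDA k).clm_apply continuous_const).sub ((hDA j).clm_apply continuous_const)

def triangleParam {N : ℕ} (a b c : Vec N) (p : ℝ × ℝ) : Vec N :=
  a + p.1 • (b - a) + (p.1 * p.2) • (c - b)

@[fun_prop]
theorem contDiff_triangleParam {N : ℕ} {n : WithTop ℕ∞} (a b c : Vec N) :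
    ContDiff ℝ n (triangleParam a b c) := by
  unfold triangleParam
  fun_prop

theorem hasDerivAt_triangleParam_fst {N : ℕ} (a b c : Vec N) (μ ν : ℝ) :
    HasDerivAt (fun μ => triangleParam a b c (μ, ν)) (b - a + ν • (c - b)) μ := by
  unfold triangleParam
  simpa using ((hasDerivAt_const μ a).fun_add ((hasDerivAt_id' μ).smul_const (b - a))).fun_add
    ((hasDerivAt_mul_const ν).smul_const (c - b))

theorem hasDerivAt_triangleParam_snd {N : ℕ} (a b c : Vec N) (μ ν : ℝ) :
    HasDerivAt (fun ν => triangleParam a b c (μ, ν)) (μ • (c - b)) ν := by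
  simpa [triangleParam] using (hasDerivAt_const ν (a + μ • (b - a))).fun_add
    (((hasDerivAt_id' ν).const_mul μ).smul_const (c - b))

theorem fluxB_eq_integral_integral {N : ℕ} {B : Fin N → Fin N → Vec N → ℝ}
    (hB : ∀ j k, Continuous (B j k)) (a b c : Vec N) :
    fluxB B a b c = ∫ μ in (0:ℝ)..1, ∫ ν in (0:ℝ)..1,
      μ * ∑ j, ∑ k, (b - a) j * (c - b) k * B j k (triangleParam a b c (μ, ν)) := by
  have hBΦ : ∀ j k, Continuous fun p => B j k (triangleParam a b c p) :=
    fun j k => (hB j k).comp (by fun_prop)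
  simp only [Finset.mul_sum, ← Finset.sum_product']
  rw [integral_integral_finsetSum _ _ (fun i _ => by fun_prop), fluxB, Finset.sum_product]
  refine Finset.sum_congr rfl fun j _ => Finset.sum_congr rfl fun k _ => ?_
  simp only [← intervalIntegral.integral_const_mul]
  refine intervalIntegral.integral_congr fun μ _ => intervalIntegral.integral_congr fun ν _ => ?_
  simp only [triangleParam, Pi.sub_apply]
  ring

theorem circA_add_circA_sub_circA_eq_fluxB {N : ℕ} (A : Vec N → Vec N) (hA : ContDiff ℝ 1 A)
    (a b c : Vec N) :
    circA A a b + circA A b c - circA A a c = fluxB (Bof A) a b c := by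
  set Φ := triangleParam a b c with hΦ
  -- `F dν - G dμ` is the pullback of `∑ₖ A_k dx_k` by `Φ`.
  set F : ℝ × ℝ → ℝ := fun p => ∑ k, (p.1 • (c - b)) k * A (Φ p) k with hF_def
  set G : ℝ × ℝ → ℝ := fun p => -∑ k, (b - a + p.2 • (c - b)) k * A (Φ p) k with hG_def
  have hF : ContDiff ℝ 1 F := by fun_prop
  have hG : ContDiff ℝ 1 G := by fun_prop
  have hA' : Differentiable ℝ A := hA.differentiable one_ne_zero
  have curl : ∀ μ ν, fderiv ℝ F (μ, ν) (1, 0) + fderiv ℝ G (μ, ν) (0, 1) =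
      μ * ∑ j, ∑ k, (b - a) j * (c - b) k * Bof A j k (Φ (μ, ν)) := by
    intro μ ν
    rw [fderiv_apply_one_zero (hF.differentiable one_ne_zero _)
        (hasDerivAt_sum_mul_apply_comp hA' ((hasDerivAt_id μ).smul_const (c - b))
          (hasDerivAt_triangleParam_fst a b c μ ν)),
      fderiv_apply_zero_one (hG.differentiable one_ne_zero _)
        (hasDerivAt_sum_mul_apply_comp hA' (((hasDerivAt_id ν).smul_const (c - b)).const_add _)
          (hasDerivAt_triangleParam_snd a b c μ ν)).neg,
      ← sum_mul_fderiv_sub_eq_sum_Bof, Finset.mul_sum, ← sub_eq_add_neg, ← Finset.sum_sub_distrib]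
    refine Finset.sum_congr rfl fun k _ => ?_
    simp only [map_add, map_smul, Pi.add_apply, Pi.smul_apply, smul_eq_mul, id]
    ring
  have hcurl_cont : Continuous fun p : ℝ × ℝ => fderiv ℝ F p (1, 0) + fderiv ℝ G p (0, 1) :=
    ((hF.continuous_fderiv one_ne_zero).clm_apply continuous_const).add
      ((hG.continuous_fderiv one_ne_zero).clm_apply continuous_const)
  have green := integral2_divergence_prod_of_hasFDerivAt F G (fderiv ℝ F) (fderiv ℝ G) 0 0 1 1
    hF.continuous.continuousOn hG.continuous.continuousOn
    (fun p _ => (hF.differentiable one_ne_zero p).hasFDerivAt)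
    (fun p _ => (hG.differentiable one_ne_zero p).hasFDerivAt)
    (hcurl_cont.continuousOn.integrableOn_compact (isCompact_uIcc.prod isCompact_uIcc))
  simp only [curl] at green
  have hF0 : ∫ ν in (0:ℝ)..1, F (0, ν) = 0 := by simp [hF_def]
  have hF1 : ∫ ν in (0:ℝ)..1, F (1, ν) = circA A b c := by
    simp [hF_def, hΦ, triangleParam, circA]
  have hG0 : ∫ μ in (0:ℝ)..1, G (μ, 0) = -circA A a b := by
    simp [hG_def, hΦ, triangleParam, circA, intervalIntegral.integral_neg]
  have hG1 : ∫ μ in (0:ℝ)..1, G (μ, 1) = -circA A a c := by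
    simp [hG_def, hΦ, triangleParam, circA, intervalIntegral.integral_neg, add_assoc, ← smul_add]
  rw [fluxB_eq_integral_integral (continuous_Bof hA), green, hF0, hF1, hG0, hG1]
  ring

theorem conj_exp_I_div_mul (ℏ t : ℝ) :
    (starRingEnd ℂ) (Complex.exp (Complex.I / ℏ * t)) = Complex.exp (-(Complex.I / ℏ) * t) := by
  rw [← Complex.exp_conj, map_mul, map_div₀, Complex.conj_I, Complex.conj_ofReal,
    Complex.conj_ofReal, neg_div]

theorem l2inner_opA {N : ℕ} (A : Vec N → Vec N) (ℏ : ℝ) (f : Vec N × Vec N → ℂ)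
    (u w : Vec N → ℂ) :
    l2inner u (opA A ℏ f w) = (((2*π*ℏ)^N : ℝ) : ℂ)⁻¹ * ∫ x : Vec N, ∫ y : Vec N, ∫ η : Vec N,
      (starRingEnd ℂ) (u x) *
        (Complex.exp (Complex.I / (ℏ:ℂ) * ((∑ j, (x j - y j) * η j : ℝ) : ℂ)) *
          Complex.exp (-(Complex.I / (ℏ:ℂ)) * ((circA A x y : ℝ) : ℂ)) *
          f ((2:ℝ)⁻¹ • (x + y), η) * w y) := by
  simp only [l2inner, opA, integral_const_mul, mul_left_comm _ (((2*π*ℏ)^N : ℝ) : ℂ)⁻¹]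

theorem conj_cohVec_mul_kernel_mul_cohVec {N : ℕ} (A : Vec N → Vec N) (hA : ContDiff ℝ 1 A)
    (ℏ : ℝ) (v : Vec N → ℂ) (Z : Vec N × Vec N) (x y η : Vec N) (s : ℂ) :
    (starRingEnd ℂ) (cohVec A ℏ v Z x) *
        (Complex.exp (Complex.I / (ℏ:ℂ) * ((∑ j, (x j - y j) * η j : ℝ) : ℂ)) *
          Complex.exp (-(Complex.I / (ℏ:ℂ)) * ((circA A x y : ℝ) : ℂ)) * s * cohVec A ℏ v Z y) =
      Complex.exp (Complex.I/(ℏ:ℂ) * ((∑ j, (x j - y j) * (η j - Z.2 j) : ℝ) : ℂ)) * s *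
        Complex.exp (-(Complex.I/(ℏ:ℂ)) * ((fluxB (Bof A) Z.1 x y : ℝ) : ℂ)) *
        (starRingEnd ℂ) (((ℏ ^ (-(N:ℝ)/4) : ℝ) : ℂ) * v ((Real.sqrt ℏ)⁻¹ • (x - Z.1))) *
        (((ℏ ^ (-(N:ℝ)/4) : ℝ) : ℂ) * v ((Real.sqrt ℏ)⁻¹ • (y - Z.1))) := by
  have phase : -(∑ j, (x j - Z.1 j / 2) * Z.2 j) - circA A Z.1 x + ∑ j, (x j - y j) * η j
      - circA A x y + ∑ j, (y j - Z.1 j / 2) * Z.2 j + circA A Z.1 y =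
      ∑ j, (x j - y j) * (η j - Z.2 j) - fluxB (Bof A) Z.1 x y := by
    have hsum : ∑ j, (x j - y j) * (η j - Z.2 j) = ∑ j, (x j - y j) * η j
        - ∑ j, (x j - Z.1 j / 2) * Z.2 j + ∑ j, (y j - Z.1 j / 2) * Z.2 j := by
      rw [← Finset.sum_sub_distrib, ← Finset.sum_add_distrib]
      exact Finset.sum_congr rfl fun j _ => by ring
    linarith [circA_add_circA_sub_circA_eq_fluxB A hA Z.1 x y]
  have hexp : Complex.exp (-(Complex.I / ℏ) * ((∑ j, (x j - Z.1 j / 2) * Z.2 j : ℝ) : ℂ)) *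
      Complex.exp (-(Complex.I / ℏ) * (circA A Z.1 x : ℂ)) *
      Complex.exp (Complex.I / ℏ * ((∑ j, (x j - y j) * η j : ℝ) : ℂ)) *
      Complex.exp (-(Complex.I / ℏ) * (circA A x y : ℂ)) *
      Complex.exp (Complex.I / ℏ * ((∑ j, (y j - Z.1 j / 2) * Z.2 j : ℝ) : ℂ)) *
      Complex.exp (Complex.I / ℏ * (circA A Z.1 y : ℂ)) =
      Complex.exp (Complex.I / ℏ * ((∑ j, (x j - y j) * (η j - Z.2 j) : ℝ) : ℂ)) *
      Complex.exp (-(Complex.I / ℏ) * (fluxB (Bof A) Z.1 x y : ℂ)) := by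
    have phaseℂ := congrArg (fun t : ℝ => (t : ℂ)) phase
    simp only [Complex.ofReal_add, Complex.ofReal_sub, Complex.ofReal_neg] at phaseℂ
    simp only [← Complex.exp_add]
    congr 1
    linear_combination Complex.I / ℏ * phaseℂ
  simp only [cohVec, map_mul, Complex.conj_ofReal, conj_exp_I_div_mul]
  linear_combination (((ℏ ^ (-(N:ℝ)/4) : ℝ) : ℂ) ^ 2 *
    (starRingEnd ℂ) (v ((Real.sqrt ℏ)⁻¹ • (x - Z.1))) * v ((Real.sqrt ℏ)⁻¹ • (y - Z.1)) * s) * hexp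

theorem coherent_expectation_formula_general {N : ℕ} (A : Vec N → Vec N) (hA : ContDiff ℝ 1 A)
    (ℏ : ℝ) (v : SchwartzMap (Vec N) ℂ)
    (f : SchwartzMap (Vec N × Vec N) ℂ) (Z : Vec N × Vec N) :
    l2inner (cohVec A ℏ ⇑v Z) (opA A ℏ ⇑f (cohVec A ℏ ⇑v Z)) =
      (((2*π*ℏ)^N : ℝ) : ℂ)⁻¹ * ∫ x : Vec N, ∫ y : Vec N, ∫ η : Vec N,
        Complex.exp (Complex.I/(ℏ:ℂ) * ((∑ j, (x j - y j) * (η j - Z.2 j) : ℝ) : ℂ)) *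
        f ((2:ℝ)⁻¹ • (x + y), η) *
        Complex.exp (-(Complex.I/(ℏ:ℂ)) * ((fluxB (Bof A) Z.1 x y : ℝ) : ℂ)) *
        (starRingEnd ℂ) (((ℏ ^ (-(N:ℝ)/4) : ℝ) : ℂ) * v ((Real.sqrt ℏ)⁻¹ • (x - Z.1))) *
        (((ℏ ^ (-(N:ℝ)/4) : ℝ) : ℂ) * v ((Real.sqrt ℏ)⁻¹ • (y - Z.1))) := by
  rw [l2inner_opA]
  simp only [conj_cohVec_mul_kernel_mul_cohVec A hA]

/-- The expectation of `Op^A_ℏ(f)` in the coherent state `v^A_ℏ(Z)` is given by an explicit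
integral depending on `A` only through `B = dA`. -/
theorem coherent_expectation_formula {N : ℕ} (A : Vec N → Vec N) (hA : ContDiff ℝ 1 A)
    (ℏ : ℝ) (hℏ : ℏ ∈ Set.Ioc (0:ℝ) 1) (v : SchwartzMap (Vec N) ℂ)
    (f : SchwartzMap (Vec N × Vec N) ℂ) (Z : Vec N × Vec N) :
    l2inner (cohVec A ℏ ⇑v Z) (opA A ℏ ⇑f (cohVec A ℏ ⇑v Z)) =
      (((2*π*ℏ)^N : ℝ) : ℂ)⁻¹ * ∫ x : Vec N, ∫ y : Vec N, ∫ η : Vec N,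
        Complex.exp (Complex.I/(ℏ:ℂ) * ((∑ j, (x j - y j) * (η j - Z.2 j) : ℝ) : ℂ)) *
        f ((2:ℝ)⁻¹ • (x + y), η) *
        Complex.exp (-(Complex.I/(ℏ:ℂ)) * ((fluxB (Bof A) Z.1 x y : ℝ) : ℂ)) *
        (starRingEnd ℂ) (((ℏ ^ (-(N:ℝ)/4) : ℝ) : ℂ) * v ((Real.sqrt ℏ)⁻¹ • (x - Z.1))) *
        (((ℏ ^ (-(N:ℝ)/4) : ℝ) : ℂ) * v ((Real.sqrt ℏ)⁻¹ • (y - Z.1))) :=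
  coherent_expectation_formula_general A hA ℏ v f Z

end
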